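/- Fix d ≥ 7, 1 ≤ q ≤ d, and let (Y_i)_{1≤i≤q} be i.i.d. with P(Y_i = k) = ψ_k (ψ_k = k^{−2}·d^{−1000−100k} for k ≥ 1, ψ_0 = 1 − ∑_{k≥1}ψ_k). Let I_q = #{i : Y_i ≥ 1}. Then for every integer k ≥ 0, P(I_q ≥ 2 and ∑_{i=1}^{q} Y_i ≥ k) ≤ d^{−10}·ψ_{k+1}, where ψ_0 := 1 for the purposes of the right-hand side when k+1 is evaluated (i.e., for k ≥ 0 the bound uses ψ_{k+1} with k+1 ≥ 1). -/

import Mathlib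

set_option linter.unusedSectionVars false
set_option maxHeartbeats 1000000

open MeasureTheory ProbabilityTheory

/-- `ψ_k = k⁻² · d^(−1000 − 100k)`. -/
noncomputable def psi (d k : ℕ) : ℝ :=
  ((k : ℝ) ^ 2)⁻¹ * (d : ℝ) ^ (-(1000 + 100 * (k : ℤ)))


lemma psi_nonneg (d k : ℕ) : 0 ≤ psi d k := by
  unfold psi
  positivity

lemma basel_aux (n : ℕ) : ∑ a ∈ Finset.Icc 1 n, ((a:ℝ)^2)⁻¹ ≤ 2 - (n:ℝ)⁻¹ := by
  induction n with
  | zero => simp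
  | succ n ih =>
    rw [← Finset.Ico_add_one_right_eq_Icc, Finset.sum_Ico_succ_top (by omega), Finset.Ico_add_one_right_eq_Icc]
    rcases Nat.eq_zero_or_pos n with hn | hn
    · subst hn; norm_num
    have h1 : (0:ℝ) < n := by positivity
    have h2 : (0:ℝ) < (n:ℝ) + 1 := by positivity
    have key : (((n:ℝ)+1)^2)⁻¹ ≤ (n:ℝ)⁻¹ - ((n:ℝ)+1)⁻¹ := by
      have heq : (n:ℝ)⁻¹ - ((n:ℝ)+1)⁻¹ = ((n:ℝ)*((n:ℝ)+1))⁻¹ := by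
        field_simp; ring
      rw [heq]
      apply inv_anti₀ (by positivity)
      nlinarith
    push_cast
    linarith [ih]

lemma basel (n : ℕ) : ∑ a ∈ Finset.Ico 1 n, ((a:ℝ)^2)⁻¹ ≤ 2 := by
  rcases Nat.eq_zero_or_pos n with hn | hn
  · subst hn; simp
  have : Finset.Ico 1 n = Finset.Icc 1 (n-1) := by
    ext x; simp only [Finset.mem_Ico, Finset.mem_Icc]; omega
  rw [this]
  calc ∑ a ∈ Finset.Icc 1 (n-1), ((a:ℝ)^2)⁻¹ ≤ 2 - ((n-1:ℕ):ℝ)⁻¹ := basel_aux _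
    _ ≤ 2 := by
        have : (0:ℝ) ≤ ((n-1:ℕ):ℝ)⁻¹ := by positivity
        linarith

lemma term_bound {a b : ℕ} (ha : 1 ≤ a) (hb : 1 ≤ b) :
    ((a:ℝ)^2)⁻¹ * ((b:ℝ)^2)⁻¹ ≤ 4 * (((a+b:ℕ):ℝ)^2)⁻¹ * (((a:ℝ)^2)⁻¹ + ((b:ℝ)^2)⁻¹) := by
  have ha' : (0:ℝ) < a := by positivity
  have hb' : (0:ℝ) < b := by positivity
  push_cast
  rcases le_total (a:ℝ) (b:ℝ) with h | h
  · have h1 : ((a:ℝ)+b)^2 ≤ 4 * (b:ℝ)^2 := by nlinarith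
    have h2 : (((a:ℝ)+b)^2)⁻¹ * ((a:ℝ)+b)^2 = 1 := by
      field_simp
    have h3 : ((b:ℝ)^2)⁻¹ ≤ 4 * (((a:ℝ)+b)^2)⁻¹ := by
      rw [show (4:ℝ) * (((a:ℝ)+b)^2)⁻¹ = (((a:ℝ)+b)^2 / 4)⁻¹ by field_simp]
      apply inv_anti₀ (by positivity)
      linarith
    have h4 : (0:ℝ) ≤ ((a:ℝ)^2)⁻¹ := by positivity
    have h5 : (0:ℝ) ≤ ((b:ℝ)^2)⁻¹ := by positivity
    calc ((a:ℝ)^2)⁻¹ * ((b:ℝ)^2)⁻¹ ≤ ((a:ℝ)^2)⁻¹ * (4 * (((a:ℝ)+b)^2)⁻¹) := by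
          exact mul_le_mul_of_nonneg_left h3 h4
      _ ≤ 4 * (((a:ℝ)+b)^2)⁻¹ * (((a:ℝ)^2)⁻¹ + ((b:ℝ)^2)⁻¹) := by
          have : (0:ℝ) ≤ (((a:ℝ)+b)^2)⁻¹ := by positivity
          nlinarith
  · have h1 : ((a:ℝ)+b)^2 ≤ 4 * (a:ℝ)^2 := by nlinarith
    have h3 : ((a:ℝ)^2)⁻¹ ≤ 4 * (((a:ℝ)+b)^2)⁻¹ := by
      rw [show (4:ℝ) * (((a:ℝ)+b)^2)⁻¹ = (((a:ℝ)+b)^2 / 4)⁻¹ by field_simp]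
      apply inv_anti₀ (by positivity)
      linarith
    have h4 : (0:ℝ) ≤ ((a:ℝ)^2)⁻¹ := by positivity
    have h5 : (0:ℝ) ≤ ((b:ℝ)^2)⁻¹ := by positivity
    calc ((a:ℝ)^2)⁻¹ * ((b:ℝ)^2)⁻¹ ≤ (4 * (((a:ℝ)+b)^2)⁻¹) * ((b:ℝ)^2)⁻¹ := by
          exact mul_le_mul_of_nonneg_right h3 h5
      _ ≤ 4 * (((a:ℝ)+b)^2)⁻¹ * (((a:ℝ)^2)⁻¹ + ((b:ℝ)^2)⁻¹) := by
          have : (0:ℝ) ≤ (((a:ℝ)+b)^2)⁻¹ := by positivity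
          nlinarith

lemma inv_sq_conv_sum {k : ℕ} :
    ∑ a ∈ Finset.Ico 1 k, ((a:ℝ)^2)⁻¹ * (((k-a:ℕ):ℝ)^2)⁻¹ ≤ 16 * ((k:ℝ)^2)⁻¹ := by
  have step : ∀ a ∈ Finset.Ico 1 k,
      ((a:ℝ)^2)⁻¹ * (((k-a:ℕ):ℝ)^2)⁻¹
        ≤ 4 * ((k:ℝ)^2)⁻¹ * (((a:ℝ)^2)⁻¹ + (((k-a:ℕ):ℝ)^2)⁻¹) := by
    intro a ha
    rw [Finset.mem_Ico] at ha
    have h := term_bound (a := a) (b := k - a) ha.1 (by omega)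
    have : a + (k - a) = k := by omega
    rw [this] at h
    exact h
  calc ∑ a ∈ Finset.Ico 1 k, ((a:ℝ)^2)⁻¹ * (((k-a:ℕ):ℝ)^2)⁻¹
      ≤ ∑ a ∈ Finset.Ico 1 k, 4 * ((k:ℝ)^2)⁻¹ * (((a:ℝ)^2)⁻¹ + (((k-a:ℕ):ℝ)^2)⁻¹) :=
        Finset.sum_le_sum step
    _ = 4 * ((k:ℝ)^2)⁻¹ * (∑ a ∈ Finset.Ico 1 k, ((a:ℝ)^2)⁻¹
          + ∑ a ∈ Finset.Ico 1 k, (((k-a:ℕ):ℝ)^2)⁻¹) := by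
        rw [← Finset.mul_sum, Finset.sum_add_distrib]
    _ ≤ 16 * ((k:ℝ)^2)⁻¹ := by
        have h1 : ∑ a ∈ Finset.Ico 1 k, ((a:ℝ)^2)⁻¹ ≤ 2 := basel k
        have h2 : ∑ a ∈ Finset.Ico 1 k, (((k-a:ℕ):ℝ)^2)⁻¹ ≤ 2 := by
          rw [show ∑ a ∈ Finset.Ico 1 k, (((k-a:ℕ):ℝ)^2)⁻¹
              = ∑ a ∈ Finset.Ico 1 k, ((a:ℝ)^2)⁻¹ from ?_]
          · exact basel k
          apply Finset.sum_nbij' (fun a => k - a) (fun a => k - a)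
          all_goals intro a ha <;> simp_all [Finset.mem_Ico] <;> omega
        have h3 : (0:ℝ) ≤ ((k:ℝ)^2)⁻¹ := by positivity
        nlinarith

lemma conv_bound {d k : ℕ} (hd : 7 ≤ d) :
    ∑ a ∈ Finset.Ico 1 k, psi d a * psi d (k - a)
      ≤ 16 * (d:ℝ)^(-(1000:ℤ)) * psi d k := by
  have hd0 : (0:ℝ) < d := by positivity
  have hdne : (d:ℝ) ≠ 0 := ne_of_gt hd0
  have hterm : ∀ a ∈ Finset.Ico 1 k,
      psi d a * psi d (k - a)
        = ((a:ℝ)^2)⁻¹ * (((k-a:ℕ):ℝ)^2)⁻¹ * (d:ℝ)^(-(2000 + 100 * (k:ℤ))) := by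
    intro a ha
    rw [Finset.mem_Ico] at ha
    unfold psi
    rw [show ((k-a:ℕ):ℤ) = (k:ℤ) - a by omega]
    have he : (d:ℝ)^(-(1000 + 100 * (a:ℤ))) * (d:ℝ)^(-(1000 + 100 * ((k:ℤ) - a)))
        = (d:ℝ)^(-(2000 + 100 * (k:ℤ))) := by
      rw [← zpow_add₀ hdne]; ring_nf
    rw [← he]; ring
  rw [Finset.sum_congr rfl hterm, ← Finset.sum_mul]
  have hrhs : 16 * (d:ℝ)^(-(1000:ℤ)) * psi d k
      = 16 * ((k:ℝ)^2)⁻¹ * (d:ℝ)^(-(2000 + 100 * (k:ℤ))) := by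
    unfold psi
    rw [show (-(2000 + 100 * (k:ℤ))) = (-(1000:ℤ)) + (-(1000 + 100 * (k:ℤ))) by ring,
      zpow_add₀ hdne]
    ring
  rw [hrhs]
  apply mul_le_mul_of_nonneg_right inv_sq_conv_sum (by positivity)

lemma psi_shift {d k : ℕ} (hd : 7 ≤ d) (hk : 1 ≤ k) (j : ℕ) :
    psi d (k + j) ≤ psi d k * ((d:ℝ)^(-(100:ℤ)))^j := by
  have hd0 : (0:ℝ) < d := by positivity
  have hdne : (d:ℝ) ≠ 0 := ne_of_gt hd0
  unfold psi
  have h1 : (((k:ℝ))^2)⁻¹ * (d:ℝ) ^ (-(1000 + 100 * (k:ℤ))) * ((d:ℝ)^(-(100:ℤ)))^j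
      = (((k:ℝ))^2)⁻¹ * (d:ℝ) ^ (-(1000 + 100 * ((k + j:ℕ):ℤ))) := by
    rw [← zpow_natCast ((d:ℝ)^(-(100:ℤ))), ← zpow_mul, mul_assoc, ← zpow_add₀ hdne]
    congr 2
    push_cast
    ring
  rw [h1]
  apply mul_le_mul_of_nonneg_right _ (by positivity)
  apply inv_anti₀ (by positivity)
  have : (k:ℝ) ≤ ((k+j:ℕ):ℝ) := by push_cast; linarith [Nat.cast_nonneg (α := ℝ) j]
  nlinarith [Nat.cast_nonneg (α := ℝ) k]

section
variable {Ω : Type*} [MeasurableSpace Ω] (μ : Measure Ω) [IsProbabilityMeasure μ]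
  (d : ℕ) (Y : ℕ → Ω → ℕ)

lemma tail_single (hd : 7 ≤ d)
    (hdist : ∀ i k, 1 ≤ k → μ {ω | Y i ω = k} = ENNReal.ofReal (psi d k))
    (i k : ℕ) (hk : 1 ≤ k) :
    μ {ω | k ≤ Y i ω} ≤ ENNReal.ofReal (2 * psi d k) := by
  have hd0 : (0:ℝ) < d := by positivity
  have hsub : {ω | k ≤ Y i ω} ⊆ ⋃ j : ℕ, {ω | Y i ω = k + j} := by
    intro ω hω
    simp only [Set.mem_setOf_eq] at hω
    refine Set.mem_iUnion.2 ⟨Y i ω - k, ?_⟩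
    simp only [Set.mem_setOf_eq]
    omega
  set r : ENNReal := ENNReal.ofReal ((d:ℝ)^(-(100:ℤ))) with hr
  have hr2 : r ≤ 2⁻¹ := by
    rw [hr, show ((2:ENNReal))⁻¹ = ENNReal.ofReal (2⁻¹) by
      rw [ENNReal.ofReal_inv_of_pos (by norm_num), ENNReal.ofReal_ofNat]]
    apply ENNReal.ofReal_le_ofReal
    rw [zpow_neg, show ((100:ℤ)) = ((100:ℕ):ℤ) by norm_num, zpow_natCast]
    apply inv_anti₀ (by norm_num)
    calc (2:ℝ) ≤ 7 := by norm_num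
      _ ≤ (d:ℝ) := by exact_mod_cast hd
      _ ≤ (d:ℝ)^(100:ℕ) := by
          apply le_self_pow₀ (by exact_mod_cast le_trans (by norm_num) hd) (by norm_num)
  calc μ {ω | k ≤ Y i ω} ≤ ∑' j : ℕ, μ {ω | Y i ω = k + j} :=
        le_trans (measure_mono hsub) (measure_iUnion_le _)
    _ ≤ ∑' j : ℕ, ENNReal.ofReal (psi d k) * r ^ j := by
        apply ENNReal.tsum_le_tsum
        intro j
        rw [hdist i (k+j) (by omega)]
        calc ENNReal.ofReal (psi d (k+j))
            ≤ ENNReal.ofReal (psi d k * ((d:ℝ)^(-(100:ℤ)))^j) :=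
              ENNReal.ofReal_le_ofReal (psi_shift hd hk j)
          _ = ENNReal.ofReal (psi d k) * r ^ j := by
              rw [ENNReal.ofReal_mul (psi_nonneg d k), ENNReal.ofReal_pow (by positivity)]
    _ = ENNReal.ofReal (psi d k) * (1 - r)⁻¹ := by
        rw [ENNReal.tsum_mul_left, ENNReal.tsum_geometric]
    _ ≤ ENNReal.ofReal (psi d k) * 2 := by
        apply mul_le_mul_right _ _
        apply le_trans (ENNReal.inv_le_inv.2 ?_) (by simp : ((2:ENNReal)⁻¹)⁻¹ ≤ 2)
        calc (2:ENNReal)⁻¹ = 1 - 2⁻¹ := by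
              rw [ENNReal.one_sub_inv_two]
          _ ≤ 1 - r := tsub_le_tsub_left hr2 1
    _ = ENNReal.ofReal (2 * psi d k) := by
        rw [mul_comm, ← ENNReal.ofReal_ofNat, ← ENNReal.ofReal_mul (by norm_num)]


lemma indep_events (hmeas : ∀ i, Measurable (Y i))
    (hindep : iIndepFun Y μ) (m : ℕ) (s t : Set ℕ) :
    μ ({ω | (∑ i ∈ Finset.range m, Y i ω) ∈ s} ∩ {ω | Y m ω ∈ t})
      = μ {ω | (∑ i ∈ Finset.range m, Y i ω) ∈ s} * μ {ω | Y m ω ∈ t} := by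
  have h : IndepFun (fun ω => ∑ i ∈ Finset.range m, Y i ω) (Y m) μ := by
    have := hindep.indepFun_sum_range_succ hmeas m
    convert this using 1
    ext ω; simp
  exact h.measure_inter_preimage_eq_mul s t trivial trivial

lemma claimA (hd : 7 ≤ d) (hmeas : ∀ i, Measurable (Y i))
    (hindep : iIndepFun Y μ)
    (hdist : ∀ i k, 1 ≤ k → μ {ω | Y i ω = k} = ENNReal.ofReal (psi d k)) :
    ∀ m, m ≤ d → ∀ k, 1 ≤ k →
      μ {ω | k ≤ ∑ i ∈ Finset.range m, Y i ω}
        ≤ ENNReal.ofReal (3 * m * psi d k) := by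
  intro m
  induction m with
  | zero =>
    intro _ k hk
    have : {ω : Ω | k ≤ ∑ i ∈ Finset.range 0, Y i ω} = ∅ := by
      ext ω; simp; omega
    rw [this]
    simp
  | succ m ih =>
    intro hmd k hk
    have hmd' : m ≤ d := by omega
    have hsub : {ω | k ≤ ∑ i ∈ Finset.range (m+1), Y i ω}
        ⊆ (⋃ a ∈ Finset.range k,
            ({ω | Y m ω = a} ∩ {ω | k - a ≤ ∑ i ∈ Finset.range m, Y i ω}))
          ∪ {ω | k ≤ Y m ω} := by
      intro ω hω
      simp only [Set.mem_setOf_eq, Finset.sum_range_succ] at hω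
      by_cases hcase : k ≤ Y m ω
      · exact Or.inr hcase
      · refine Or.inl (Set.mem_biUnion (s := (Finset.range k : Finset ℕ))
          (x := Y m ω) (Finset.mem_range.2 (by omega)) ?_)
        exact ⟨rfl, by simp only [Set.mem_setOf_eq]; omega⟩
    have key : ∀ a, μ ({ω | Y m ω = a} ∩ {ω | k - a ≤ ∑ i ∈ Finset.range m, Y i ω})
        = μ {ω | k - a ≤ ∑ i ∈ Finset.range m, Y i ω} * μ {ω | Y m ω = a} := by
      intro a
      rw [Set.inter_comm]
      exact indep_events μ Y hmeas hindep m {n | k - a ≤ n} {a}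
    calc μ {ω | k ≤ ∑ i ∈ Finset.range (m+1), Y i ω}
        ≤ μ (⋃ a ∈ Finset.range k,
            ({ω | Y m ω = a} ∩ {ω | k - a ≤ ∑ i ∈ Finset.range m, Y i ω}))
          + μ {ω | k ≤ Y m ω} := le_trans (measure_mono hsub) (measure_union_le _ _)
      _ ≤ (∑ a ∈ Finset.range k,
            μ ({ω | Y m ω = a} ∩ {ω | k - a ≤ ∑ i ∈ Finset.range m, Y i ω}))
          + ENNReal.ofReal (2 * psi d k) := by
          gcongr
          · exact measure_biUnion_finset_le _ _
          · exact tail_single μ d Y hd hdist m k hk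
      _ ≤ (ENNReal.ofReal (3 * m * psi d k)
            + ∑ a ∈ Finset.Ico 1 k, ENNReal.ofReal (3 * m * psi d (k - a) * psi d a))
          + ENNReal.ofReal (2 * psi d k) := by
          gcongr
          rw [show Finset.range k = Finset.Ico 0 k from by rw [Finset.range_eq_Ico],
            Finset.sum_eq_sum_Ico_succ_bot hk, show (0+1) = 1 from rfl]
          refine add_le_add ?_ (Finset.sum_le_sum ?_)
          · -- a = 0 term
            rw [key 0]
            calc μ {ω | k - 0 ≤ ∑ i ∈ Finset.range m, Y i ω} * μ {ω | Y m ω = 0}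
                ≤ μ {ω | k - 0 ≤ ∑ i ∈ Finset.range m, Y i ω} * 1 := by
                  gcongr; exact prob_le_one
              _ = μ {ω | k ≤ ∑ i ∈ Finset.range m, Y i ω} := by
                  rw [mul_one, Nat.sub_zero]
              _ ≤ ENNReal.ofReal (3 * m * psi d k) := ih hmd' k hk
          · intro a ha
            rw [Finset.mem_Ico] at ha
            rw [key a, hdist m a ha.1]
            calc μ {ω | k - a ≤ ∑ i ∈ Finset.range m, Y i ω} * ENNReal.ofReal (psi d a)
                ≤ ENNReal.ofReal (3 * m * psi d (k - a)) * ENNReal.ofReal (psi d a) := by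
                  gcongr
                  exact ih hmd' (k - a) (by omega)
              _ = ENNReal.ofReal (3 * m * psi d (k - a) * psi d a) := by
                  rw [← ENNReal.ofReal_mul
                    (mul_nonneg (by positivity) (psi_nonneg d (k-a)))]
      _ ≤ ENNReal.ofReal (3 * ((m+1:ℕ):ℝ) * psi d k) := by
          have hnn : ∀ a ∈ Finset.Ico 1 k, 0 ≤ 3 * (m:ℝ) * psi d (k - a) * psi d a :=
            fun a _ => mul_nonneg (mul_nonneg (by positivity) (psi_nonneg d (k-a)))
              (psi_nonneg d a)
          have hnn1 : (0:ℝ) ≤ 3 * (m:ℝ) * psi d k :=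
            mul_nonneg (by positivity) (psi_nonneg d k)
          have hnn2 : (0:ℝ) ≤ 2 * psi d k := mul_nonneg (by norm_num) (psi_nonneg d k)
          rw [← ENNReal.ofReal_sum_of_nonneg hnn,
            ← ENNReal.ofReal_add hnn1 (Finset.sum_nonneg hnn),
            ← ENNReal.ofReal_add (by linarith [Finset.sum_nonneg hnn]) hnn2]
          apply ENNReal.ofReal_le_ofReal
          have hconv : ∑ a ∈ Finset.Ico 1 k, 3 * (m:ℝ) * psi d (k - a) * psi d a
              ≤ 3 * m * (16 * (d:ℝ)^(-(1000:ℤ)) * psi d k) := by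
            calc ∑ a ∈ Finset.Ico 1 k, 3 * (m:ℝ) * psi d (k - a) * psi d a
                = 3 * m * ∑ a ∈ Finset.Ico 1 k, psi d a * psi d (k - a) := by
                  rw [Finset.mul_sum]; apply Finset.sum_congr rfl; intro a _; ring
              _ ≤ 3 * m * (16 * (d:ℝ)^(-(1000:ℤ)) * psi d k) := by
                  apply mul_le_mul_of_nonneg_left (conv_bound hd) (by positivity)
          have hsmall : 3 * (m:ℝ) * (16 * (d:ℝ)^(-(1000:ℤ)) * psi d k) ≤ psi d k := by
            have hd0 : (0:ℝ) < d := by positivity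
            have h48 : 48 * (m:ℝ) ≤ (d:ℝ)^(1000:ℕ) := by
              have hm : (m:ℝ) ≤ (d:ℝ) := by exact_mod_cast hmd'
              have h7 : (7:ℝ) ≤ (d:ℝ) := by exact_mod_cast hd
              have h1 : (48:ℝ) ≤ (d:ℝ)^(999:ℕ) := by
                calc (48:ℝ) ≤ 7^(999:ℕ) := by
                      calc (48:ℝ) ≤ 7^(2:ℕ) := by norm_num
                        _ ≤ 7^(999:ℕ) := by
                            apply pow_le_pow_right₀ (by norm_num) (by norm_num)
                  _ ≤ (d:ℝ)^(999:ℕ) := by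
                      apply pow_le_pow_left₀ (by norm_num) h7
              calc 48 * (m:ℝ) ≤ (d:ℝ)^(999:ℕ) * (d:ℝ) := by
                    apply mul_le_mul h1 hm (by positivity) (by positivity)
                _ = (d:ℝ)^(1000:ℕ) := by rw [← pow_succ]
            have hz : (d:ℝ)^(-(1000:ℤ)) = ((d:ℝ)^(1000:ℕ))⁻¹ := by
              rw [zpow_neg, show ((1000:ℤ)) = ((1000:ℕ):ℤ) by norm_num, zpow_natCast]
            have hle1 : 3 * (m:ℝ) * (16 * (d:ℝ)^(-(1000:ℤ))) ≤ 1 := by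
              rw [hz, show 3 * (m:ℝ) * (16 * ((d:ℝ)^(1000:ℕ))⁻¹)
                = (48 * m) / (d:ℝ)^(1000:ℕ) by ring, div_le_one (by positivity)]
              exact h48
            have hpk := psi_nonneg d k
            calc 3 * (m:ℝ) * (16 * (d:ℝ)^(-(1000:ℤ)) * psi d k)
                = (3 * (m:ℝ) * (16 * (d:ℝ)^(-(1000:ℤ)))) * psi d k := by ring
              _ ≤ 1 * psi d k := mul_le_mul_of_nonneg_right hle1 hpk
              _ = psi d k := one_mul _
          have := psi_nonneg d k
          push_cast
          nlinarith [hconv, hsmall]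

lemma claimB (hd : 7 ≤ d) (hmeas : ∀ i, Measurable (Y i))
    (hindep : iIndepFun Y μ)
    (hdist : ∀ i k, 1 ≤ k → μ {ω | Y i ω = k} = ENNReal.ofReal (psi d k)) :
    ∀ m, m ≤ d → ∀ k, 2 ≤ k →
      μ {ω | 2 ≤ ((Finset.range m).filter (fun i => 1 ≤ Y i ω)).card
            ∧ k ≤ ∑ i ∈ Finset.range m, Y i ω}
        ≤ ENNReal.ofReal (54 * m^2 * (d:ℝ)^(-(1000:ℤ)) * psi d k) := by
  intro m
  induction m with
  | zero =>
    intro _ k hk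
    have : {ω : Ω | 2 ≤ ((Finset.range 0).filter (fun i => 1 ≤ Y i ω)).card
        ∧ k ≤ ∑ i ∈ Finset.range 0, Y i ω} = ∅ := by
      ext ω; simp
    rw [this]
    simp
  | succ m ih =>
    intro hmd k hk
    have hmd' : m ≤ d := by omega
    have hd0 : (0:ℝ) < d := by positivity
    -- subset decomposition
    have hsub : {ω | 2 ≤ ((Finset.range (m+1)).filter (fun i => 1 ≤ Y i ω)).card
          ∧ k ≤ ∑ i ∈ Finset.range (m+1), Y i ω}
        ⊆ ({ω | 2 ≤ ((Finset.range m).filter (fun i => 1 ≤ Y i ω)).card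
              ∧ k ≤ ∑ i ∈ Finset.range m, Y i ω}
          ∪ ⋃ a ∈ Finset.Ico 1 k,
              ({ω | Y m ω = a} ∩ {ω | k - a ≤ ∑ i ∈ Finset.range m, Y i ω}))
          ∪ ({ω | 1 ≤ ∑ i ∈ Finset.range m, Y i ω} ∩ {ω | k ≤ Y m ω}) := by
      intro ω hω
      simp only [Set.mem_setOf_eq] at hω
      obtain ⟨hI, hS⟩ := hω
      have hsum : ∑ i ∈ Finset.range (m+1), Y i ω
          = (∑ i ∈ Finset.range m, Y i ω) + Y m ω := Finset.sum_range_succ _ _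
      have hcard : ((Finset.range (m+1)).filter (fun i => 1 ≤ Y i ω)).card
          ≤ ((Finset.range m).filter (fun i => 1 ≤ Y i ω)).card + 1 := by
        have hss : (Finset.range (m+1)).filter (fun i => 1 ≤ Y i ω)
            ⊆ insert m ((Finset.range m).filter (fun i => 1 ≤ Y i ω)) := by
          intro i hi
          simp only [Finset.mem_filter, Finset.mem_range, Finset.mem_insert] at hi ⊢
          omega
        calc ((Finset.range (m+1)).filter (fun i => 1 ≤ Y i ω)).card
            ≤ (insert m ((Finset.range m).filter (fun i => 1 ≤ Y i ω))).card :=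
              Finset.card_le_card hss
          _ ≤ _ := Finset.card_insert_le _ _
      rcases Nat.lt_or_ge (Y m ω) 1 with hY | hY1
      · -- Y m ω = 0
        have hY0 : Y m ω = 0 := by omega
        refine Or.inl (Or.inl ⟨?_, by omega⟩)
        have : (Finset.range (m+1)).filter (fun i => 1 ≤ Y i ω)
            = (Finset.range m).filter (fun i => 1 ≤ Y i ω) := by
          rw [Finset.range_add_one, Finset.filter_insert, if_neg (by omega)]
        rw [this] at hI
        exact hI
      · rcases Nat.lt_or_ge (Y m ω) k with hYk | hYk
        · -- 1 ≤ Y m ω < k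
          refine Or.inl (Or.inr (Set.mem_biUnion (s := (Finset.Ico 1 k : Finset ℕ))
            (x := Y m ω) (Finset.mem_Ico.2 ⟨hY1, hYk⟩) ?_))
          exact ⟨rfl, by simp only [Set.mem_setOf_eq]; omega⟩
        · -- k ≤ Y m ω
          refine Or.inr ⟨?_, hYk⟩
          have h1 : 1 ≤ ((Finset.range m).filter (fun i => 1 ≤ Y i ω)).card := by omega
          obtain ⟨i, hi⟩ := Finset.card_pos.1 h1
          simp only [Finset.mem_filter, Finset.mem_range] at hi
          simp only [Set.mem_setOf_eq]
          calc 1 ≤ Y i ω := hi.2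
            _ ≤ ∑ j ∈ Finset.range m, Y j ω :=
              Finset.single_le_sum (f := fun j => Y j ω) (fun j _ => Nat.zero_le _)
                (Finset.mem_range.2 hi.1)
    have key : ∀ a, μ ({ω | Y m ω = a} ∩ {ω | k - a ≤ ∑ i ∈ Finset.range m, Y i ω})
        = μ {ω | k - a ≤ ∑ i ∈ Finset.range m, Y i ω} * μ {ω | Y m ω = a} := by
      intro a
      rw [Set.inter_comm]
      exact indep_events μ Y hmeas hindep m {n | k - a ≤ n} {a}
    have key2 : μ ({ω | 1 ≤ ∑ i ∈ Finset.range m, Y i ω} ∩ {ω | k ≤ Y m ω})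
        = μ {ω | 1 ≤ ∑ i ∈ Finset.range m, Y i ω} * μ {ω | k ≤ Y m ω} :=
      indep_events μ Y hmeas hindep m {n | 1 ≤ n} {n | k ≤ n}
    calc μ {ω | 2 ≤ ((Finset.range (m+1)).filter (fun i => 1 ≤ Y i ω)).card
          ∧ k ≤ ∑ i ∈ Finset.range (m+1), Y i ω}
        ≤ (μ {ω | 2 ≤ ((Finset.range m).filter (fun i => 1 ≤ Y i ω)).card
              ∧ k ≤ ∑ i ∈ Finset.range m, Y i ω}
          + ∑ a ∈ Finset.Ico 1 k,
              μ ({ω | Y m ω = a} ∩ {ω | k - a ≤ ∑ i ∈ Finset.range m, Y i ω}))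
          + μ ({ω | 1 ≤ ∑ i ∈ Finset.range m, Y i ω} ∩ {ω | k ≤ Y m ω}) := by
          refine le_trans (measure_mono hsub) (le_trans (measure_union_le _ _) ?_)
          gcongr
          refine le_trans (measure_union_le _ _) ?_
          gcongr
          exact measure_biUnion_finset_le _ _
      _ ≤ (ENNReal.ofReal (54 * m^2 * (d:ℝ)^(-(1000:ℤ)) * psi d k)
          + ∑ a ∈ Finset.Ico 1 k, ENNReal.ofReal (3 * m * psi d (k - a) * psi d a))
          + ENNReal.ofReal (3 * m * psi d 1 * (2 * psi d k)) := by
          refine add_le_add (add_le_add (ih hmd' k hk) (Finset.sum_le_sum ?_)) ?_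
          · intro a ha
            rw [Finset.mem_Ico] at ha
            rw [key a, hdist m a ha.1]
            calc μ {ω | k - a ≤ ∑ i ∈ Finset.range m, Y i ω} * ENNReal.ofReal (psi d a)
                ≤ ENNReal.ofReal (3 * m * psi d (k - a)) * ENNReal.ofReal (psi d a) := by
                  gcongr
                  exact claimA μ d Y hd hmeas hindep hdist m hmd' (k - a) (by omega)
              _ = ENNReal.ofReal (3 * m * psi d (k - a) * psi d a) := by
                  rw [← ENNReal.ofReal_mul
                    (mul_nonneg (by positivity) (psi_nonneg d (k-a)))]
          · rw [key2]
            calc μ {ω | 1 ≤ ∑ i ∈ Finset.range m, Y i ω} * μ {ω | k ≤ Y m ω}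
                ≤ ENNReal.ofReal (3 * m * psi d 1) * ENNReal.ofReal (2 * psi d k) := by
                  gcongr
                  · exact claimA μ d Y hd hmeas hindep hdist m hmd' 1 le_rfl
                  · exact tail_single μ d Y hd hdist m k (by omega)
              _ = ENNReal.ofReal (3 * m * psi d 1 * (2 * psi d k)) := by
                  rw [← ENNReal.ofReal_mul
                    (mul_nonneg (by positivity) (psi_nonneg d 1))]
      _ ≤ ENNReal.ofReal (54 * ((m+1:ℕ):ℝ)^2 * (d:ℝ)^(-(1000:ℤ)) * psi d k) := by
          have hnn : ∀ a ∈ Finset.Ico 1 k, 0 ≤ 3 * (m:ℝ) * psi d (k - a) * psi d a :=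
            fun a _ => mul_nonneg (mul_nonneg (by positivity) (psi_nonneg d (k-a)))
              (psi_nonneg d a)
          have hD : (0:ℝ) ≤ (d:ℝ)^(-(1000:ℤ)) := by positivity
          have hpk := psi_nonneg d k
          have hp1 := psi_nonneg d 1
          have hnn1 : (0:ℝ) ≤ 54 * (m:ℝ)^2 * (d:ℝ)^(-(1000:ℤ)) * psi d k := by positivity
          have hnn2 : (0:ℝ) ≤ 3 * (m:ℝ) * psi d 1 * (2 * psi d k) := by positivity
          rw [← ENNReal.ofReal_sum_of_nonneg hnn,
            ← ENNReal.ofReal_add hnn1 (Finset.sum_nonneg hnn),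
            ← ENNReal.ofReal_add (by linarith [Finset.sum_nonneg hnn]) hnn2]
          apply ENNReal.ofReal_le_ofReal
          have hconv : ∑ a ∈ Finset.Ico 1 k, 3 * (m:ℝ) * psi d (k - a) * psi d a
              ≤ 3 * m * (16 * (d:ℝ)^(-(1000:ℤ)) * psi d k) := by
            calc ∑ a ∈ Finset.Ico 1 k, 3 * (m:ℝ) * psi d (k - a) * psi d a
                = 3 * m * ∑ a ∈ Finset.Ico 1 k, psi d a * psi d (k - a) := by
                  rw [Finset.mul_sum]; apply Finset.sum_congr rfl; intro a _; ring
              _ ≤ 3 * m * (16 * (d:ℝ)^(-(1000:ℤ)) * psi d k) := by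
                  apply mul_le_mul_of_nonneg_left (conv_bound hd) (by positivity)
          have hpsi1 : psi d 1 ≤ (d:ℝ)^(-(1000:ℤ)) := by
            unfold psi
            rw [show ((1:ℕ):ℝ) = (1:ℝ) by norm_num]
            rw [one_pow, inv_one, one_mul]
            apply zpow_le_zpow_right₀ (by exact_mod_cast le_trans (by norm_num) hd)
            norm_num
          have h2 : 3 * (m:ℝ) * psi d 1 * (2 * psi d k)
              ≤ 6 * m * ((d:ℝ)^(-(1000:ℤ)) * psi d k) := by
            calc 3 * (m:ℝ) * psi d 1 * (2 * psi d k)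
                = (6 * (m:ℝ) * psi d k) * psi d 1 := by ring
              _ ≤ (6 * (m:ℝ) * psi d k) * (d:ℝ)^(-(1000:ℤ)) := by
                  apply mul_le_mul_of_nonneg_left hpsi1 (by positivity)
              _ = 6 * m * ((d:ℝ)^(-(1000:ℤ)) * psi d k) := by ring
          push_cast
          nlinarith [hconv, h2, mul_nonneg hD hpk, mul_nonneg (mul_nonneg hD hpk) (Nat.cast_nonneg (α := ℝ) m)]

end

lemma final_real {d q k K : ℕ} (hd : 7 ≤ d) (hqd : q ≤ d)
    (hK2 : 2 ≤ K) (hKk : k ≤ K) (hk1 : k + 1 ≤ 2 * K) :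
    54 * (q:ℝ)^2 * (d:ℝ)^(-(1000:ℤ)) * psi d K
      ≤ (d:ℝ)^(-(10:ℤ)) * psi d (k+1) := by
  have hD0 : (0:ℝ) < d := by positivity
  have hD1 : (1:ℝ) ≤ d := by exact_mod_cast le_trans (by norm_num) hd
  have hD7 : (7:ℝ) ≤ d := by exact_mod_cast hd
  have hdne : (d:ℝ) ≠ 0 := ne_of_gt hD0
  have hK0 : (0:ℝ) < (K:ℝ) := by
    have : (0:ℕ) < K := by omega
    exact_mod_cast this
  have hq : (q:ℝ) ≤ (d:ℝ) := by exact_mod_cast hqd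
  have hkK : (k:ℝ) + 1 ≤ 2 * K := by exact_mod_cast hk1
  unfold psi
  have hcast : ((k+1:ℕ):ℤ) = (k:ℤ)+1 := by push_cast; ring
  have hcastR : ((k+1:ℕ):ℝ) = (k:ℝ)+1 := by push_cast; ring
  rw [hcast, hcastR]
  have h1 : (d:ℝ)^(-(1000:ℤ)) * (d:ℝ)^(-(1000+100*(K:ℤ)))
      = (d:ℝ)^(-(2000+100*(K:ℤ))) := by
    rw [← zpow_add₀ hdne]; ring_nf
  have h2 : (d:ℝ)^(-(10:ℤ)) * (d:ℝ)^(-(1000+100*((k:ℤ)+1)))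
      = (d:ℝ)^(-(1110+100*(k:ℤ))) := by
    rw [← zpow_add₀ hdne]; ring_nf
  have h3 : (d:ℝ)^(2:ℕ) * (d:ℝ)^(-(2000+100*(k:ℤ)))
      = (d:ℝ)^(-(1998+100*(k:ℤ))) := by
    rw [← zpow_natCast (d:ℝ) 2, ← zpow_add₀ hdne]
    congr 1
    ring
  calc 54 * (q:ℝ)^2 * (d:ℝ)^(-(1000:ℤ)) * ((((K:ℝ))^2)⁻¹ * (d:ℝ)^(-(1000+100*(K:ℤ))))
      = (54 * (q:ℝ)^2 * (d:ℝ)^(-(2000+100*(K:ℤ)))) * (((K:ℝ))^2)⁻¹ := by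
        linear_combination (54 * (q:ℝ)^2 * (((K:ℝ))^2)⁻¹) * h1
    _ ≤ (54 * (d:ℝ)^(2:ℕ) * (d:ℝ)^(-(2000+100*(k:ℤ)))) * (((K:ℝ))^2)⁻¹ := by
        apply mul_le_mul_of_nonneg_right _ (by positivity)
        apply mul_le_mul
        · have : (q:ℝ)^2 ≤ (d:ℝ)^(2:ℕ) :=
            pow_le_pow_left₀ (by positivity) hq 2
          linarith
        · apply zpow_le_zpow_right₀ hD1
          omega
        · positivity
        · positivity
    _ = (54 * (d:ℝ)^(-(1998+100*(k:ℤ)))) * (((K:ℝ))^2)⁻¹ := by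
        linear_combination (54 * (((K:ℝ))^2)⁻¹) * h3
    _ ≤ ((d:ℝ)^(-(1110+100*(k:ℤ)))) * (((k:ℝ)+1)^2)⁻¹ := by
        rw [← div_eq_mul_inv, ← div_eq_mul_inv, div_le_div_iff₀ (by positivity) (by positivity)]
        have hsq : ((k:ℝ)+1)^2 ≤ 4 * (K:ℝ)^2 := by nlinarith [hkK, hK0]
        have h216 : (216:ℝ) ≤ (d:ℝ)^(888:ℤ) := by
          calc (216:ℝ) ≤ 343 := by norm_num
            _ = 7^(3:ℕ) := by norm_num
            _ ≤ (d:ℝ)^(3:ℕ) := pow_le_pow_left₀ (by norm_num) hD7 3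
            _ = (d:ℝ)^((3:ℕ):ℤ) := (zpow_natCast _ _).symm
            _ ≤ (d:ℝ)^(888:ℤ) := zpow_le_zpow_right₀ hD1 (by norm_num)
        have hsplit : (d:ℝ)^(-(1110+100*(k:ℤ)))
            = (d:ℝ)^(888:ℤ) * (d:ℝ)^(-(1998+100*(k:ℤ))) := by
          rw [← zpow_add₀ hdne]; ring_nf
        have he0 : (0:ℝ) < (d:ℝ)^(-(1998+100*(k:ℤ))) := by positivity
        calc 54 * (d:ℝ)^(-(1998+100*(k:ℤ))) * ((k:ℝ)+1)^2
            ≤ 54 * (d:ℝ)^(-(1998+100*(k:ℤ))) * (4 * (K:ℝ)^2) := by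
              apply mul_le_mul_of_nonneg_left hsq (by positivity)
          _ = (216 * (d:ℝ)^(-(1998+100*(k:ℤ)))) * (K:ℝ)^2 := by ring
          _ ≤ ((d:ℝ)^(888:ℤ) * (d:ℝ)^(-(1998+100*(k:ℤ)))) * (K:ℝ)^2 := by
              apply mul_le_mul_of_nonneg_right _ (by positivity)
              apply mul_le_mul_of_nonneg_right h216 (le_of_lt he0)
          _ = (d:ℝ)^(-(1110+100*(k:ℤ))) * (K:ℝ)^2 := by rw [hsplit]
    _ = (d:ℝ)^(-(10:ℤ)) * ((((k:ℝ)+1)^2)⁻¹ * (d:ℝ)^(-(1000+100*((k:ℤ)+1)))) := by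
        linear_combination ((((k:ℝ)+1)^2)⁻¹) * h2.symm


/-- If `(Y_i)` are i.i.d. with `P(Y_i = k) = ψ_k` for `k ≥ 1`, and
`I_q = #{i < q : Y_i ≥ 1}`, then for every `1 ≤ q ≤ d` and every `k ≥ 0`,
`P(I_q ≥ 2 and ∑_{i<q} Y_i ≥ k) ≤ d^{-10} ψ_{k+1}`. -/
theorem stmt_19 {Ω : Type*} [MeasurableSpace Ω] (μ : Measure Ω) [IsProbabilityMeasure μ]
    (d : ℕ) (hd : 7 ≤ d)
    (Y : ℕ → Ω → ℕ) (hmeas : ∀ i, Measurable (Y i))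
    (hindep : iIndepFun Y μ)
    (hdist : ∀ i k, 1 ≤ k → μ {ω | Y i ω = k} = ENNReal.ofReal (psi d k))
    (q : ℕ) (hq1 : 1 ≤ q) (hqd : q ≤ d) (k : ℕ) :
    μ {ω | 2 ≤ ((Finset.range q).filter (fun i => 1 ≤ Y i ω)).card ∧
           k ≤ ∑ i ∈ Finset.range q, Y i ω}
      ≤ ENNReal.ofReal ((d : ℝ) ^ (-10 : ℤ) * psi d (k + 1)) := by
  set K := max k 2 with hK
  have hsub : {ω | 2 ≤ ((Finset.range q).filter (fun i => 1 ≤ Y i ω)).card ∧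
          k ≤ ∑ i ∈ Finset.range q, Y i ω}
      ⊆ {ω | 2 ≤ ((Finset.range q).filter (fun i => 1 ≤ Y i ω)).card ∧
          K ≤ ∑ i ∈ Finset.range q, Y i ω} := by
    intro ω hω
    simp only [Set.mem_setOf_eq] at hω ⊢
    obtain ⟨h1, h2⟩ := hω
    refine ⟨h1, ?_⟩
    have h3 : 2 ≤ ∑ i ∈ Finset.range q, Y i ω := by
      calc 2 ≤ ((Finset.range q).filter (fun i => 1 ≤ Y i ω)).card := h1
        _ = ((Finset.range q).filter (fun i => 1 ≤ Y i ω)).card • 1 := by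
            rw [smul_eq_mul, mul_one]
        _ ≤ ∑ i ∈ (Finset.range q).filter (fun i => 1 ≤ Y i ω), Y i ω :=
            Finset.card_nsmul_le_sum _ _ _ (fun i hi => (Finset.mem_filter.1 hi).2)
        _ ≤ ∑ i ∈ Finset.range q, Y i ω :=
            Finset.sum_le_sum_of_subset (Finset.filter_subset _ _)
    omega
  calc μ {ω | 2 ≤ ((Finset.range q).filter (fun i => 1 ≤ Y i ω)).card ∧
          k ≤ ∑ i ∈ Finset.range q, Y i ω}
      ≤ μ {ω | 2 ≤ ((Finset.range q).filter (fun i => 1 ≤ Y i ω)).card ∧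
          K ≤ ∑ i ∈ Finset.range q, Y i ω} := measure_mono hsub
    _ ≤ ENNReal.ofReal (54 * q^2 * (d:ℝ)^(-(1000:ℤ)) * psi d K) :=
        claimB μ d Y hd hmeas hindep hdist q hqd K (le_max_right _ _)
    _ ≤ ENNReal.ofReal ((d : ℝ) ^ (-10 : ℤ) * psi d (k + 1)) := by
        apply ENNReal.ofReal_le_ofReal
        have := final_real (d := d) (q := q) (k := k) (K := K) hd hqd
          (le_max_right _ _) (le_max_left _ _) (by omega)
        convert this using 3
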